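/- Let G be a group and let J and K be proper subgroups of G, with x ∈ J \ Z(J), x ∉ K, y ∈ K \ Z(K), and y ∉ J. Set H := J ∩ K. Suppose that (H is a maximal subgroup of J, or K is a normal maximal subgroup of G), and that (H is a maximal subgroup of K, or J is a normal maximal subgroup of G). Then there exists g ∈ H such that [x,g] ≠ 1, [g,y] ≠ 1, ⟨x,g⟩ ≠ G and ⟨g,y⟩ ≠ G; that is, (x, g, y) is a path of length 2 in the non-commuting, non-generating graph nc(G). -/

import Mathlib

open Subgroup

namespace NC

variable {G : Type*} [Group G]

/-- The centre of a subgroup `H`, realised as a subgroup of the ambient group `G`. -/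
def centerOf (H : Subgroup G) : Subgroup G := H ⊓ Subgroup.centralizer (H : Set G)

/-- `H` is a maximal subgroup of `K` (both subgroups of the ambient group `G`). -/
def IsMaximalIn (H K : Subgroup G) : Prop :=
  H < K ∧ ∀ T : Subgroup G, H < T → T ≤ K → T = K

/-- The non-commuting, non-generating graph of `G`: vertices `x, y` are adjacent
iff they do not commute and do not generate `G`.  (Central elements are isolated
vertices here; the paper simply removes them from the vertex set.) -/
def ncGraph (G : Type*) [Group G] : SimpleGraph G where
  Adj x y := x * y ≠ y * x ∧ Subgroup.closure {x, y} ≠ ⊤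
  symm := by
    refine ⟨fun x y h => ?_⟩
    exact ⟨fun e => h.1 e.symm, by rw [Set.pair_comm]; exact h.2⟩
  loopless := by
    refine ⟨fun x h => ?_⟩
    exact h.1 rfl

/-- The conjugate `g H g⁻¹` of a subgroup `H` by an element `g`. -/
def conjSub (g : G) (H : Subgroup G) : Subgroup G := H.map (MulAut.conj g).toMonoidHom

/-- "The quotient of `G` by the subgroup `H` is cyclic": every coset of `H` is a
power of a fixed coset.  For `H` normal this says exactly that `G/H` is cyclic. -/
def QuotCyclic (H : Subgroup G) : Prop := ∃ g : G, ∀ x : G, ∃ n : ℤ, x⁻¹ * g ^ n ∈ H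

/-- `P` is a Sylow `p`-subgroup of `G`. -/
def IsSylowIn (p : ℕ) (P : Subgroup G) : Prop :=
  IsPGroup p P ∧ ∀ R : Subgroup G, IsPGroup p R → P ≤ R → R = P

/-- The Frattini subgroup of a subgroup `P` (the intersection of the maximal
subgroups of `P`), realised as a subgroup of the ambient group. -/
def phiIn (P : Subgroup G) : Subgroup G := P ⊓ sInf {W : Subgroup G | IsMaximalIn W P}

/-- `G` has exactly two conjugacy classes of maximal subgroups. -/
def TwoMaxClasses (G : Type*) [Group G] : Prop :=
  ∃ K L : Subgroup G, IsCoatom K ∧ IsCoatom L ∧ (∀ g : G, conjSub g K ≠ L) ∧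
    ∀ T : Subgroup G, IsCoatom T → (∃ g : G, T = conjSub g K) ∨ (∃ g : G, T = conjSub g L)

/-- The induced subgraph of the non-commuting, non-generating graph on the
actual vertex set `G \ Z(G)`. -/
def ncSubgraph (G : Type*) [Group G] := (ncGraph G).induce {x : G | x ∉ Subgroup.center G}

/-!
If `K` is a normal maximal subgroup of `G` and `J ≰ K`, then `J = (J ⊓ K) T` for every `T` with
`J ⊓ K < T ≤ J` (Dedekind), so `H = J ⊓ K` is maximal in `J`; symmetrically it is maximal in `K`.
As `x ∉ H`, the subgroup `⟨H, x⟩` is all of `J`, so `x` would be central in `J` if it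
centralised `H`. Hence `C_H(x)` and likewise `C_H(y)` are proper subgroups of `H`; a group is not
the union of two proper subgroups, so some `g ∈ H` commutes with neither `x` nor `y`.
Finally `⟨x, g⟩ ≤ J` and `⟨g, y⟩ ≤ K` are proper subgroups of `G`.
-/

lemma isMaximalIn_inf_of_normal_of_isCoatom {J K : Subgroup G} [K.Normal] (hK : IsCoatom K)
    (hJK : ¬ J ≤ K) : IsMaximalIn (J ⊓ K) J := by
  refine ⟨inf_le_left.lt_of_ne fun h => hJK (h ▸ inf_le_right),
    fun T hT hTJ => hTJ.antisymm fun j hj => ?_⟩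
  have hTK : ¬ T ≤ K := fun h => hT.not_ge (le_inf hTJ h)
  have hTK_top : T ⊔ K = ⊤ := sup_comm K T ▸ hK.2 _ (left_lt_sup.2 hTK)
  obtain ⟨t, ht, k, hk, rfl⟩ := mem_sup_of_normal_right.1 (hTK_top ▸ mem_top j : j ∈ T ⊔ K)
  have hkJ : k ∈ J := by simpa using J.mul_mem (J.inv_mem (hTJ ht)) hj
  exact T.mul_mem ht (hT.le ⟨hkJ, hk⟩)

lemma mem_centerOf_of_isMaximalIn {H J : Subgroup G} {x : G} (hHJ : IsMaximalIn H J)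
    (hxJ : x ∈ J) (hxH : x ∉ H) (hHx : H ≤ centralizer {x}) : x ∈ centerOf J := by
  have hx : x ∈ J ⊓ centralizer {x} := ⟨hxJ, mem_centralizer_singleton_iff.2 rfl⟩
  have hJx : J ⊓ centralizer {x} = J :=
    hHJ.2 _ ((le_inf hHJ.1.le hHx).lt_of_ne fun h => hxH (h ▸ hx)) inf_le_left
  exact ⟨hxJ, mem_centralizer_iff.2 fun g hg =>
    mem_centralizer_singleton_iff.1 (hJx.ge hg).2⟩

lemma exists_mem_notMem_of_not_le_of_not_le {H A B : Subgroup G} (hA : ¬ H ≤ A)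
    (hB : ¬ H ≤ B) : ∃ g ∈ H, g ∉ A ∧ g ∉ B := by
  by_contra! h
  exact not_or.2 ⟨hA, hB⟩
    (SubgroupClass.subset_union.1 fun g hg => (em (g ∈ A)).imp_right (h g hg))

lemma ncGraph_adj_of_mem {J : Subgroup G} (hJ : J ≠ ⊤) {a b : G} (ha : a ∈ J) (hb : b ∈ J)
    (hab : a * b ≠ b * a) : (ncGraph G).Adj a b :=
  ⟨hab, fun h => hJ (top_le_iff.1 (h ▸ (closure_le J).2
    (Set.insert_subset ha (Set.singleton_subset_iff.2 hb))))⟩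

/-- Lemma 2.10(ii) / `lem:centremaxmax`. -/
theorem statement_5 {J K : Subgroup G} (hJ : J ≠ ⊤) (hK : K ≠ ⊤)
    {x y : G} (hxJ : x ∈ J) (hxZ : x ∉ centerOf J) (hxK : x ∉ K)
    (hyK : y ∈ K) (hyZ : y ∉ centerOf K) (hyJ : y ∉ J)
    (h1 : IsMaximalIn (J ⊓ K) J ∨ (K.Normal ∧ IsCoatom K))
    (h2 : IsMaximalIn (J ⊓ K) K ∨ (J.Normal ∧ IsCoatom J)) :
    ∃ g ∈ J ⊓ K, (ncGraph G).Adj x g ∧ (ncGraph G).Adj g y := by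
  have hJmax : IsMaximalIn (J ⊓ K) J :=
    h1.elim id fun ⟨_, hc⟩ => isMaximalIn_inf_of_normal_of_isCoatom hc fun h => hxK (h hxJ)
  have hKmax : IsMaximalIn (K ⊓ J) K :=
    h2.elim (inf_comm J K ▸ ·) fun ⟨_, hc⟩ =>
      isMaximalIn_inf_of_normal_of_isCoatom hc fun h => hyJ (h hyK)
  have hx : ¬ J ⊓ K ≤ centralizer {x} := fun h =>
    hxZ (mem_centerOf_of_isMaximalIn hJmax hxJ (fun hx => hxK hx.2) h)
  have hy : ¬ J ⊓ K ≤ centralizer {y} := fun h =>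
    hyZ (mem_centerOf_of_isMaximalIn hKmax hyK (fun hy => hyJ hy.2) (inf_comm J K ▸ h))
  obtain ⟨g, hg, hgx, hgy⟩ := exists_mem_notMem_of_not_le_of_not_le hx hy
  rw [mem_centralizer_singleton_iff] at hgx hgy
  exact ⟨g, hg, ncGraph_adj_of_mem hJ hxJ hg.1 (Ne.symm hgx), ncGraph_adj_of_mem hK hg.2 hyK hgy⟩

end NC
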